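/- arXiv:2405.13819 — 4 statements merged into one kernel-verified Lean document; each statement's English description precedes it below -/
import Mathlib

section
/- Pairing a state with an effect of unipartite oblate stabilizer theory yields a probability: for every ρ ∈ conv(Ω) and every e ∈ conv({0, I} ∪ {R ω R† : ω ∈ Ω}) (convex hulls in the real vector space of 2×2 Hermitian matrices), the real number Re(tr(ρ e)) lies in the interval [0, 1]. In particular, the maximum of tr(ρ e) over extreme points ρ ∈ Ω, e ∈ {RωR† : ω ∈ Ω} equals ½(1 + r² cos(π/4)) = 1. -/
/-!
Write a 2×2 matrix as `bloch x y z = ½(I + xσ₁ + yσ₂ + zσ₃)`. Then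
`tr (bloch u * bloch v) = ½(1 + ⟨u, v⟩)`, and conjugation by `R` rotates the Bloch vector by
`π/4` about the z-axis. The Bloch vectors of `Ω` are `±r e₁, ±r e₂, ±e₃`, and since
`r² cos(π/4) = r² sin(π/4) = 1`, every pairing of a state in `Ω` with a rotated one equals
`½(1 + ε)` with `ε ∈ {-1, 0, 1}`; the pairing with the effect `I` is `tr ρ = 1`. The pairing
`(ρ, e) ↦ Re tr(ρ e)` is real-bilinear, so the bounds pass to the convex hulls.
-/

open Matrix Kronecker Complex

noncomputable section

/-- The Pauli matrices indexed by ℤ₄. -/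
def pauli : ZMod 4 → Matrix (Fin 2) (Fin 2) ℂ := fun μ =>
  if μ = 0 then 1
  else if μ = 1 then !![0, 1; 1, 0]
  else if μ = 2 then !![0, -Complex.I; Complex.I, 0]
  else !![1, 0; 0, -1]

/-- The rotation R = diag(e^{-iπ/8}, e^{iπ/8}). -/
def R : Matrix (Fin 2) (Fin 2) ℂ :=
  !![Complex.exp (-(Real.pi / 8 : ℝ) * Complex.I), 0;
     0, Complex.exp ((Real.pi / 8 : ℝ) * Complex.I)]

/-- The Bell vector |Φ⁺⟩ = (|00⟩+|11⟩)/√2. -/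
def bell : Fin 2 × Fin 2 → ℂ := fun p =>
  if p.1 = p.2 then ((Real.sqrt 2 : ℝ) : ℂ)⁻¹ else 0

/-- The Bell projector P_Φ = |Φ⁺⟩⟨Φ⁺|. -/
def PΦ : Matrix (Fin 2 × Fin 2) (Fin 2 × Fin 2) ℂ :=
  Matrix.of fun p q => bell p * (starRingEnd ℂ) (bell q)

/-- Φ⁺_{μ,m} = ((σ_μ R^m)† ⊗ I) P_Φ ((σ_μ R^m) ⊗ I). -/
def PhiProj (μ : ZMod 4) (m : ZMod 8) : Matrix (Fin 2 × Fin 2) (Fin 2 × Fin 2) ℂ :=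
  ((pauli μ * R ^ m.val)ᴴ ⊗ₖ (1 : Matrix (Fin 2) (Fin 2) ℂ)) * PΦ *
    ((pauli μ * R ^ m.val) ⊗ₖ (1 : Matrix (Fin 2) (Fin 2) ℂ))

/-- r = 2^{1/4}. -/
def r : ℝ := (2 : ℝ) ^ ((1 : ℝ) / 4)

/-- The stretched stabilizer states Ω. -/
def Ω : Set (Matrix (Fin 2) (Fin 2) ℂ) :=
  { (1 / 2 : ℂ) • (1 + (r : ℂ) • pauli 1),
    (1 / 2 : ℂ) • (1 - (r : ℂ) • pauli 1),
    (1 / 2 : ℂ) • (1 + (r : ℂ) • pauli 2),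
    (1 / 2 : ℂ) • (1 - (r : ℂ) • pauli 2),
    (1 / 2 : ℂ) • (1 + pauli 3),
    (1 / 2 : ℂ) • (1 - pauli 3) }

/-- The set Φ of entangled states/effects. -/
def PhiSet : Set (Matrix (Fin 2 × Fin 2) (Fin 2 × Fin 2) ℂ) :=
  { Q | ∃ μ : ZMod 4, ∃ m : ZMod 8, m ∈ ({1, 3, 5, 7} : Set (ZMod 8)) ∧ Q = PhiProj μ m }

/-- Place a 4×4 matrix `Q` on tensor factors (2,3) of (ℂ²)⊗⁴ (identity on factors 1 and 4). -/
def mid (Q : Matrix (Fin 2 × Fin 2) (Fin 2 × Fin 2) ℂ) :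
    Matrix ((Fin 2 × Fin 2) × (Fin 2 × Fin 2)) ((Fin 2 × Fin 2) × (Fin 2 × Fin 2)) ℂ :=
  Matrix.of fun p q =>
    (1 : Matrix (Fin 2) (Fin 2) ℂ) p.1.1 q.1.1 *
      Q (p.1.2, p.2.1) (q.1.2, q.2.1) *
      (1 : Matrix (Fin 2) (Fin 2) ℂ) p.2.2 q.2.2

/-- Partial trace over the first tensor factor of ℂ² ⊗ ℂ². -/
def ptr1 (M : Matrix (Fin 2 × Fin 2) (Fin 2 × Fin 2) ℂ) : Matrix (Fin 2) (Fin 2) ℂ :=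
  Matrix.of fun i j => ∑ a : Fin 2, M (a, i) (a, j)

/-- Partial trace over the second tensor factor of ℂ² ⊗ ℂ². -/
def ptr2 (M : Matrix (Fin 2 × Fin 2) (Fin 2 × Fin 2) ℂ) : Matrix (Fin 2) (Fin 2) ℂ :=
  Matrix.of fun i j => ∑ a : Fin 2, M (i, a) (j, a)

/-- Partial trace over the second and third tensor factors of (ℂ²)⊗⁴. -/
def ptr23
    (M : Matrix ((Fin 2 × Fin 2) × (Fin 2 × Fin 2)) ((Fin 2 × Fin 2) × (Fin 2 × Fin 2)) ℂ) :
    Matrix (Fin 2 × Fin 2) (Fin 2 × Fin 2) ℂ :=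
  Matrix.of fun p q => ∑ b : Fin 2, ∑ c : Fin 2, M ((p.1, b), (c, p.2)) ((q.1, b), (c, q.2))

end

section Convexity

variable {𝕜 E F G : Type*} [CommSemiring 𝕜] [PartialOrder 𝕜]
  [AddCommMonoid E] [AddCommMonoid F] [AddCommMonoid G] [Module 𝕜 E] [Module 𝕜 F] [Module 𝕜 G]

theorem LinearMap.mem_of_mem_convexHull₂ (f : E →ₗ[𝕜] F →ₗ[𝕜] G) {s : Set E} {t : Set F}
    {C : Set G} (hC : Convex 𝕜 C) (h : ∀ x ∈ s, ∀ y ∈ t, f x y ∈ C) :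
    ∀ x ∈ convexHull 𝕜 s, ∀ y ∈ convexHull 𝕜 t, f x y ∈ C := by
  have hs : s ⊆ {x | ∀ y ∈ convexHull 𝕜 t, f x y ∈ C} := fun x hx =>
    convexHull_min (fun y hy => h x hx y hy) (hC.linear_preimage (f x))
  have hconv : Convex 𝕜 {x | ∀ y ∈ convexHull 𝕜 t, f x y ∈ C} := by
    convert convex_iInter₂ fun y (_ : y ∈ convexHull 𝕜 t) => hC.linear_preimage (f.flip y)
    ext
    simp only [Set.mem_ofPred_eq, Set.mem_iInter, Set.mem_preimage, flip_apply]
  exact convexHull_min hs hconv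

end Convexity

noncomputable section

open ComplexConjugate

def reTraceMul (n : Type*) [Fintype n] [DecidableEq n] :
    Matrix n n ℂ →ₗ[ℝ] Matrix n n ℂ →ₗ[ℝ] ℝ :=
  (LinearMap.mul ℝ (Matrix n n ℂ)).compr₂ (Complex.reLm ∘ₗ Matrix.traceLinearMap n ℝ ℂ)

def bloch (x y z : ℝ) : Matrix (Fin 2) (Fin 2) ℂ :=
  (1 / 2 : ℂ) • (1 + (x : ℂ) • pauli 1 + (y : ℂ) • pauli 2 + (z : ℂ) • pauli 3)

theorem pauli_one : pauli 1 = !![0, 1; 1, 0] := rfl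
theorem pauli_two : pauli 2 = !![0, -I; I, 0] := rfl
theorem pauli_three : pauli 3 = !![1, 0; 0, -1] := rfl

theorem bloch_eq (x y z : ℝ) :
    bloch x y z = !![(1 + (z : ℂ)) / 2, (x - y * I) / 2; (x + y * I) / 2, (1 - z) / 2] := by
  rw [bloch, pauli_one, pauli_two, pauli_three, one_fin_two]
  simp only [smul_of, of_add_of, smul_cons, smul_empty, cons_add_cons, empty_add_empty,
    smul_eq_mul]
  ring_nf

theorem trace_bloch (x y z : ℝ) : (bloch x y z).trace = 1 := by
  rw [bloch_eq, trace_fin_two_of]; ring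

theorem trace_bloch_mul_bloch (x y z x' y' z' : ℝ) :
    (bloch x y z * bloch x' y' z').trace = (1 + x * x' + y * y' + z * z') / 2 := by
  rw [bloch_eq, bloch_eq]
  simp only [trace_fin_two, mul_apply, Fin.sum_univ_two, of_apply, cons_val', cons_val_zero,
    cons_val_one, empty_val', cons_val_fin_one]
  linear_combination -(y * y' : ℂ) / 2 * I_sq

def zRot (θ : ℝ) : Matrix (Fin 2) (Fin 2) ℂ :=
  !![exp (-(θ / 2 : ℝ) * I), 0; 0, exp ((θ / 2 : ℝ) * I)]

theorem R_eq_zRot : R = zRot (Real.pi / 4) := by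
  rw [R, zRot, show Real.pi / 4 / 2 = Real.pi / 8 by ring]

theorem exp_mul_I_mul_conj_exp_mul_I (a b : ℝ) :
    exp (a * I) * conj (exp (b * I)) = Real.cos (a - b) + Real.sin (a - b) * I := by
  rw [← Complex.exp_conj, map_mul, conj_ofReal, conj_I, ← exp_add, ofReal_cos, ofReal_sin,
    ← exp_mul_I]
  push_cast; ring_nf

theorem zRot_mul_bloch_mul_conjTranspose (θ x y z : ℝ) :
    zRot θ * bloch x y z * (zRot θ)ᴴ =
      bloch (Real.cos θ * x - Real.sin θ * y) (Real.sin θ * x + Real.cos θ * y) z := by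
  have h := exp_mul_I_mul_conj_exp_mul_I
  have hA := h (-(θ / 2)) (-(θ / 2))
  have hB := h (-(θ / 2)) (θ / 2)
  have hC := h (θ / 2) (-(θ / 2))
  have hD := h (θ / 2) (θ / 2)
  rw [show -(θ / 2) - θ / 2 = -θ by ring, Real.cos_neg, Real.sin_neg] at hB
  rw [show θ / 2 - -(θ / 2) = θ by ring] at hC
  simp only [sub_self, Real.cos_zero, Real.sin_zero, ofReal_one, ofReal_zero, zero_mul, add_zero,
    ofReal_neg] at hA hB hC hD
  ext i j
  fin_cases i <;> fin_cases j <;>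
    simp only [zRot, bloch_eq, mul_apply, Fin.sum_univ_two, conjTranspose_apply, of_apply,
      cons_val', cons_val_zero, cons_val_one, empty_val', cons_val_fin_one, star_def, map_zero,
      mul_zero, zero_mul, add_zero, zero_add, Fin.zero_eta, Fin.mk_one]
  · linear_combination (1 + (z : ℂ)) / 2 * hA
  · simp only [ofReal_sub, ofReal_add, ofReal_mul]
    linear_combination (x - y * I) / 2 * hB + Real.sin θ * y / 2 * I_sq
  · simp only [ofReal_sub, ofReal_add, ofReal_mul]
    linear_combination (x + y * I) / 2 * hC + Real.sin θ * y / 2 * I_sq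
  · linear_combination (1 - (z : ℂ)) / 2 * hD

theorem r_sq_mul_cos_pi_div_four : r ^ 2 * Real.cos (Real.pi / 4) = 1 := by
  have hr : r ^ 2 = √2 := by
    rw [r, ← Real.rpow_natCast, ← Real.rpow_mul (by norm_num), Real.sqrt_eq_rpow]
    norm_num
  rw [hr, Real.cos_pi_div_four, ← mul_div_assoc, Real.mul_self_sqrt (by norm_num)]
  norm_num

def stretchedBloch (v : ℝ × ℝ × ℝ) : Matrix (Fin 2) (Fin 2) ℂ :=
  bloch (r * v.1) (r * v.2.1) v.2.2

def axisVertices : Set (ℝ × ℝ × ℝ) :=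
  {(1, 0, 0), (-1, 0, 0), (0, 1, 0), (0, -1, 0), (0, 0, 1), (0, 0, -1)}

theorem Ω_eq_image : Ω = stretchedBloch '' axisVertices := by
  simp only [Ω, axisVertices, Set.image_insert_eq, Set.image_singleton, stretchedBloch, bloch,
    mul_one, mul_zero, mul_neg, ofReal_zero, ofReal_one, ofReal_neg, zero_smul, one_smul,
    neg_smul, add_zero, ← sub_eq_add_neg]

theorem re_trace_stretchedBloch_mul_R_conj (u v : ℝ × ℝ × ℝ) :
    (stretchedBloch u * (R * stretchedBloch v * Rᴴ)).trace.re =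
      (1 + u.1 * v.1 + u.2.1 * v.2.1 + u.2.1 * v.1 - u.1 * v.2.1 + u.2.2 * v.2.2) / 2 := by
  rw [stretchedBloch, stretchedBloch, R_eq_zRot, zRot_mul_bloch_mul_conjTranspose,
    trace_bloch_mul_bloch, Real.sin_pi_div_four, ← Real.cos_pi_div_four]
  norm_cast
  linear_combination
    (u.1 * v.1 + u.2.1 * v.2.1 + u.2.1 * v.1 - u.1 * v.2.1) / 2 * r_sq_mul_cos_pi_div_four

theorem mem_Icc_of_mem_axisVertices {u v : ℝ × ℝ × ℝ} (hu : u ∈ axisVertices)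
    (hv : v ∈ axisVertices) :
    (1 + u.1 * v.1 + u.2.1 * v.2.1 + u.2.1 * v.1 - u.1 * v.2.1 + u.2.2 * v.2.2) / 2 ∈
      Set.Icc 0 1 := by
  simp only [axisVertices, Set.mem_insert_iff, Set.mem_singleton_iff] at hu hv
  rcases hu with rfl | rfl | rfl | rfl | rfl | rfl <;>
    rcases hv with rfl | rfl | rfl | rfl | rfl | rfl <;> norm_num

theorem re_trace_mul_R_conj_mem_Icc {ρ ω : Matrix (Fin 2) (Fin 2) ℂ} (hρ : ρ ∈ Ω)
    (hω : ω ∈ Ω) :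
    (ρ * (R * ω * Rᴴ)).trace.re ∈ Set.Icc 0 1 := by
  rw [Ω_eq_image] at hρ hω
  obtain ⟨u, hu, rfl⟩ := hρ
  obtain ⟨v, hv, rfl⟩ := hω
  rw [re_trace_stretchedBloch_mul_R_conj]
  exact mem_Icc_of_mem_axisVertices hu hv

theorem re_trace_of_mem_Ω {ρ : Matrix (Fin 2) (Fin 2) ℂ} (hρ : ρ ∈ Ω) : ρ.trace.re = 1 := by
  rw [Ω_eq_image] at hρ
  obtain ⟨u, -, rfl⟩ := hρ
  rw [stretchedBloch, trace_bloch, one_re]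

end

/-- Pairing a state of unipartite oblate stabilizer theory with an effect
yields a probability, and the maximum over extreme points ρ ∈ Ω, e ∈ {RωR† : ω ∈ Ω}
equals ½(1 + r² cos(π/4)) = 1. -/
theorem stmt_5 :
    (∀ ρ ∈ convexHull ℝ Ω,
      ∀ e ∈ convexHull ℝ
          (({0, 1} : Set (Matrix (Fin 2) (Fin 2) ℂ)) ∪ (fun ω => R * ω * Rᴴ) '' Ω),
        (Matrix.trace (ρ * e)).re ∈ Set.Icc (0 : ℝ) 1) ∧
    IsGreatest
      {x : ℝ | ∃ ρ ∈ Ω, ∃ ω ∈ Ω, x = (Matrix.trace (ρ * (R * ω * Rᴴ))).re}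
      (1 / 2 * (1 + r ^ 2 * Real.cos (Real.pi / 4))) ∧
    1 / 2 * (1 + r ^ 2 * Real.cos (Real.pi / 4)) = 1 := by
  have hmax : 1 / 2 * (1 + r ^ 2 * Real.cos (Real.pi / 4)) = 1 := by
    rw [r_sq_mul_cos_pi_div_four]; norm_num
  refine ⟨?_, ⟨?_, ?_⟩, hmax⟩
  · refine (reTraceMul (Fin 2)).mem_of_mem_convexHull₂ (convex_Icc 0 1) ?_
    rintro ρ hρ e ((rfl | rfl) | ⟨ω, hω, rfl⟩)
    · show (ρ * 0).trace.re ∈ _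
      simp
    · show (ρ * 1).trace.re ∈ _
      rw [mul_one, re_trace_of_mem_Ω hρ]
      exact Set.right_mem_Icc.2 zero_le_one
    · exact re_trace_mul_R_conj_mem_Icc hρ hω
  · have hx : stretchedBloch (1, 0, 0) ∈ Ω :=
      Ω_eq_image ▸ Set.mem_image_of_mem _ (by simp [axisVertices])
    refine ⟨_, hx, _, hx, ?_⟩
    rw [hmax, re_trace_stretchedBloch_mul_R_conj]
    norm_num
  · rintro x ⟨ρ, hρ, ω, hω, rfl⟩
    rw [hmax]
    exact (re_trace_mul_R_conj_mem_Icc hρ hω).2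
end

section
/- For all 2×2 complex matrices A, B, C, D: tr₂₃( (A⊗I⊗I⊗I)(P_Φ⊗I⊗I)(B⊗I⊗I⊗I)(I⊗P_Φ⊗I)(I⊗I⊗I⊗C)(I⊗I⊗P_Φ)(I⊗I⊗I⊗D) ) = ¼ (A Cᵀ ⊗ I) P_Φ (Dᵀ B ⊗ I), where the product on the left is of 16×16 matrices on (ℂ²)⊗⁴ and P_Φ⊗I⊗I, I⊗P_Φ⊗I, I⊗I⊗P_Φ place the Bell projector on tensor factors (1,2), (2,3), (3,4) respectively. -/
open Matrix Kronecker Complex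

lemma PΦ_apply (a b c d : Fin 2) :
    PΦ (a, b) (c, d) = (if a = b then (1:ℂ) else 0) * (if c = d then (1:ℂ) else 0) * (1/2) := by
  have h : (((Real.sqrt 2 : ℝ) : ℂ))⁻¹ * (((Real.sqrt 2 : ℝ) : ℂ))⁻¹ = 1/2 := by
    have h2 : ((Real.sqrt 2 : ℝ) : ℂ) * ((Real.sqrt 2 : ℝ) : ℂ) = 2 := by
      norm_cast
      exact_mod_cast Real.mul_self_sqrt (by norm_num : (0:ℝ) ≤ 2)
    rw [← mul_inv, h2]
    norm_num
  simp only [PΦ, bell, Matrix.of_apply]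
  split <;> split <;> simp [Complex.conj_ofReal, h]

section steps
variable (A B C D : Matrix (Fin 2) (Fin 2) ℂ)

local notation "I2" => (1 : Matrix (Fin 2) (Fin 2) ℂ)

set_option maxHeartbeats 1000000 in
lemma step1 (x1 x2 x3 x4 y1 y2 y3 y4 : Fin 2) :
    (((A ⊗ₖ I2) ⊗ₖ (I2 ⊗ₖ I2)) * (PΦ ⊗ₖ (I2 ⊗ₖ I2)))
        ((x1,x2),(x3,x4)) ((y1,y2),(y3,y4))
      = (if y1 = y2 then (1:ℂ) else 0) * (if x3 = y3 then (1:ℂ) else 0) *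
        (if x4 = y4 then (1:ℂ) else 0) * ((1/2) * A x1 x2) := by
  rw [Matrix.mul_apply]
  simp only [Fintype.sum_prod_type, kroneckerMap_apply, PΦ_apply, Matrix.one_apply,
    mul_ite, ite_mul, mul_zero, zero_mul, mul_one, one_mul,
    Finset.sum_ite_eq, Finset.sum_ite_eq', Finset.mem_univ, if_true,
    Finset.sum_ite_irrel, Finset.sum_const_zero]
  try (split_ifs <;> (first | ring1 | (simp only [Finset.sum_ite_eq, Finset.sum_ite_eq',
      Finset.mem_univ, if_true, mul_ite, ite_mul, mul_zero, zero_mul,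
      Finset.sum_ite_irrel, Finset.sum_const_zero, mul_one, one_mul]; try ring1)))
  all_goals (first | ring1 | (simp only [Finset.sum_ite_eq, Finset.sum_ite_eq',
      Finset.mem_univ, if_true, mul_ite, ite_mul, mul_zero, zero_mul,
      Finset.sum_ite_irrel, Finset.sum_const_zero, mul_one, one_mul]; try ring1))

set_option maxHeartbeats 1000000 in
lemma step2 (x1 x2 x3 x4 y1 y2 y3 y4 : Fin 2) :
    (((A ⊗ₖ I2) ⊗ₖ (I2 ⊗ₖ I2)) * (PΦ ⊗ₖ (I2 ⊗ₖ I2)) * ((B ⊗ₖ I2) ⊗ₖ (I2 ⊗ₖ I2)))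
        ((x1,x2),(x3,x4)) ((y1,y2),(y3,y4))
      = (if x3 = y3 then (1:ℂ) else 0) * (if x4 = y4 then (1:ℂ) else 0) *
        ((1/2) * A x1 x2 * B y2 y1) := by
  rw [Matrix.mul_apply]
  simp only [Fintype.sum_prod_type, kroneckerMap_apply, PΦ_apply, Matrix.one_apply,
    mul_ite, ite_mul, mul_zero, zero_mul, mul_one, one_mul,
    Finset.sum_ite_eq, Finset.sum_ite_eq', Finset.mem_univ, if_true,
    Finset.sum_ite_irrel, Finset.sum_const_zero, step1]
  try (split_ifs <;> (first | ring1 | (simp only [Finset.sum_ite_eq, Finset.sum_ite_eq',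
      Finset.mem_univ, if_true, mul_ite, ite_mul, mul_zero, zero_mul,
      Finset.sum_ite_irrel, Finset.sum_const_zero, mul_one, one_mul]; try ring1)))
  all_goals (first | ring1 | (simp only [Finset.sum_ite_eq, Finset.sum_ite_eq',
      Finset.mem_univ, if_true, mul_ite, ite_mul, mul_zero, zero_mul,
      Finset.sum_ite_irrel, Finset.sum_const_zero, mul_one, one_mul]; try ring1))

set_option maxHeartbeats 1000000 in
lemma step3 (x1 x2 x3 x4 y1 y2 y3 y4 : Fin 2) :
    (((A ⊗ₖ I2) ⊗ₖ (I2 ⊗ₖ I2)) * (PΦ ⊗ₖ (I2 ⊗ₖ I2)) * ((B ⊗ₖ I2) ⊗ₖ (I2 ⊗ₖ I2)) * mid PΦ)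
        ((x1,x2),(x3,x4)) ((y1,y2),(y3,y4))
      = (if y2 = y3 then (1:ℂ) else 0) * (if x4 = y4 then (1:ℂ) else 0) *
        ((1/4) * A x1 x2 * B x3 y1) := by
  rw [Matrix.mul_apply]
  simp only [Fintype.sum_prod_type, kroneckerMap_apply, PΦ_apply, Matrix.one_apply,
    mul_ite, ite_mul, mul_zero, zero_mul, mul_one, one_mul,
    Finset.sum_ite_eq, Finset.sum_ite_eq', Finset.mem_univ, if_true,
    Finset.sum_ite_irrel, Finset.sum_const_zero, step2, mid, Matrix.of_apply]
  try (split_ifs <;> (first | ring1 | (simp only [Finset.sum_ite_eq, Finset.sum_ite_eq',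
      Finset.mem_univ, if_true, mul_ite, ite_mul, mul_zero, zero_mul,
      Finset.sum_ite_irrel, Finset.sum_const_zero, mul_one, one_mul]; try ring1)))
  all_goals (first | ring1 | (simp only [Finset.sum_ite_eq, Finset.sum_ite_eq',
      Finset.mem_univ, if_true, mul_ite, ite_mul, mul_zero, zero_mul,
      Finset.sum_ite_irrel, Finset.sum_const_zero, mul_one, one_mul]; try ring1))

set_option maxHeartbeats 1000000 in
lemma step4 (x1 x2 x3 x4 y1 y2 y3 y4 : Fin 2) :
    (((A ⊗ₖ I2) ⊗ₖ (I2 ⊗ₖ I2)) * (PΦ ⊗ₖ (I2 ⊗ₖ I2)) * ((B ⊗ₖ I2) ⊗ₖ (I2 ⊗ₖ I2)) * mid PΦ * ((I2 ⊗ₖ I2) ⊗ₖ (I2 ⊗ₖ C)))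
        ((x1,x2),(x3,x4)) ((y1,y2),(y3,y4))
      = (if y2 = y3 then (1:ℂ) else 0) * ((1/4) * A x1 x2 * B x3 y1 * C x4 y4) := by
  rw [Matrix.mul_apply]
  simp only [Fintype.sum_prod_type, kroneckerMap_apply, PΦ_apply, Matrix.one_apply,
    mul_ite, ite_mul, mul_zero, zero_mul, mul_one, one_mul,
    Finset.sum_ite_eq, Finset.sum_ite_eq', Finset.mem_univ, if_true,
    Finset.sum_ite_irrel, Finset.sum_const_zero, step3]
  try (split_ifs <;> (first | ring1 | (simp only [Finset.sum_ite_eq, Finset.sum_ite_eq',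
      Finset.mem_univ, if_true, mul_ite, ite_mul, mul_zero, zero_mul,
      Finset.sum_ite_irrel, Finset.sum_const_zero, mul_one, one_mul]; try ring1)))
  all_goals (first | ring1 | (simp only [Finset.sum_ite_eq, Finset.sum_ite_eq',
      Finset.mem_univ, if_true, mul_ite, ite_mul, mul_zero, zero_mul,
      Finset.sum_ite_irrel, Finset.sum_const_zero, mul_one, one_mul]; try ring1))

set_option maxHeartbeats 1000000 in
lemma step5 (x1 x2 x3 x4 y1 y2 y3 y4 : Fin 2) :
    (((A ⊗ₖ I2) ⊗ₖ (I2 ⊗ₖ I2)) * (PΦ ⊗ₖ (I2 ⊗ₖ I2)) * ((B ⊗ₖ I2) ⊗ₖ (I2 ⊗ₖ I2)) * mid PΦ * ((I2 ⊗ₖ I2) ⊗ₖ (I2 ⊗ₖ C)) * ((I2 ⊗ₖ I2) ⊗ₖ PΦ))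
        ((x1,x2),(x3,x4)) ((y1,y2),(y3,y4))
      = (if y3 = y4 then (1:ℂ) else 0) * ((1/8) * A x1 x2 * B x3 y1 * C x4 y2) := by
  rw [Matrix.mul_apply]
  simp only [Fintype.sum_prod_type, kroneckerMap_apply, PΦ_apply, Matrix.one_apply,
    mul_ite, ite_mul, mul_zero, zero_mul, mul_one, one_mul,
    Finset.sum_ite_eq, Finset.sum_ite_eq', Finset.mem_univ, if_true,
    Finset.sum_ite_irrel, Finset.sum_const_zero, step4]
  try (split_ifs <;> (first | ring1 | (simp only [Finset.sum_ite_eq, Finset.sum_ite_eq',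
      Finset.mem_univ, if_true, mul_ite, ite_mul, mul_zero, zero_mul,
      Finset.sum_ite_irrel, Finset.sum_const_zero, mul_one, one_mul]; try ring1)))
  all_goals (first | ring1 | (simp only [Finset.sum_ite_eq, Finset.sum_ite_eq',
      Finset.mem_univ, if_true, mul_ite, ite_mul, mul_zero, zero_mul,
      Finset.sum_ite_irrel, Finset.sum_const_zero, mul_one, one_mul]; try ring1))

set_option maxHeartbeats 1000000 in
lemma step6 (x1 x2 x3 x4 y1 y2 y3 y4 : Fin 2) :
    (((A ⊗ₖ I2) ⊗ₖ (I2 ⊗ₖ I2)) * (PΦ ⊗ₖ (I2 ⊗ₖ I2)) * ((B ⊗ₖ I2) ⊗ₖ (I2 ⊗ₖ I2)) * mid PΦ * ((I2 ⊗ₖ I2) ⊗ₖ (I2 ⊗ₖ C)) * ((I2 ⊗ₖ I2) ⊗ₖ PΦ) * ((I2 ⊗ₖ I2) ⊗ₖ (I2 ⊗ₖ D)))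
        ((x1,x2),(x3,x4)) ((y1,y2),(y3,y4))
      = (1/8) * A x1 x2 * B x3 y1 * C x4 y2 * D y3 y4 := by
  rw [Matrix.mul_apply]
  simp only [Fintype.sum_prod_type, kroneckerMap_apply, PΦ_apply, Matrix.one_apply,
    mul_ite, ite_mul, mul_zero, zero_mul, mul_one, one_mul,
    Finset.sum_ite_eq, Finset.sum_ite_eq', Finset.mem_univ, if_true,
    Finset.sum_ite_irrel, Finset.sum_const_zero, step5]
  try (split_ifs <;> (first | ring1 | (simp only [Finset.sum_ite_eq, Finset.sum_ite_eq',
      Finset.mem_univ, if_true, mul_ite, ite_mul, mul_zero, zero_mul,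
      Finset.sum_ite_irrel, Finset.sum_const_zero, mul_one, one_mul]; try ring1)))
  all_goals (first | ring1 | (simp only [Finset.sum_ite_eq, Finset.sum_ite_eq',
      Finset.mem_univ, if_true, mul_ite, ite_mul, mul_zero, zero_mul,
      Finset.sum_ite_irrel, Finset.sum_const_zero, mul_one, one_mul]; try ring1))

end steps

set_option maxHeartbeats 1000000

/-- tr₂₃((A⊗I⊗I⊗I)(P_Φ⊗I⊗I)(B⊗I⊗I⊗I)(I⊗P_Φ⊗I)(I⊗I⊗I⊗C)(I⊗I⊗P_Φ)(I⊗I⊗I⊗D))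
= ¼ (A Cᵀ ⊗ I) P_Φ (Dᵀ B ⊗ I). -/
theorem stmt_12 (A B C D : Matrix (Fin 2) (Fin 2) ℂ) :
    ptr23
      (((A ⊗ₖ (1 : Matrix (Fin 2) (Fin 2) ℂ)) ⊗ₖ
          ((1 : Matrix (Fin 2) (Fin 2) ℂ) ⊗ₖ (1 : Matrix (Fin 2) (Fin 2) ℂ))) *
        (PΦ ⊗ₖ ((1 : Matrix (Fin 2) (Fin 2) ℂ) ⊗ₖ (1 : Matrix (Fin 2) (Fin 2) ℂ))) *
        ((B ⊗ₖ (1 : Matrix (Fin 2) (Fin 2) ℂ)) ⊗ₖ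
          ((1 : Matrix (Fin 2) (Fin 2) ℂ) ⊗ₖ (1 : Matrix (Fin 2) (Fin 2) ℂ))) *
        mid PΦ *
        (((1 : Matrix (Fin 2) (Fin 2) ℂ) ⊗ₖ (1 : Matrix (Fin 2) (Fin 2) ℂ)) ⊗ₖ
          ((1 : Matrix (Fin 2) (Fin 2) ℂ) ⊗ₖ C)) *
        (((1 : Matrix (Fin 2) (Fin 2) ℂ) ⊗ₖ (1 : Matrix (Fin 2) (Fin 2) ℂ)) ⊗ₖ PΦ) *
        (((1 : Matrix (Fin 2) (Fin 2) ℂ) ⊗ₖ (1 : Matrix (Fin 2) (Fin 2) ℂ)) ⊗ₖ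
          ((1 : Matrix (Fin 2) (Fin 2) ℂ) ⊗ₖ D)))
      = (1 / 4 : ℂ) •
          (((A * Cᵀ) ⊗ₖ (1 : Matrix (Fin 2) (Fin 2) ℂ)) * PΦ *
            ((Dᵀ * B) ⊗ₖ (1 : Matrix (Fin 2) (Fin 2) ℂ))) := by

  ext ⟨i, j⟩ ⟨k, l⟩
  simp only [ptr23, Matrix.of_apply, step6]
  simp only [Matrix.smul_apply, smul_eq_mul, Matrix.mul_apply, kroneckerMap_apply,
    PΦ_apply, Matrix.one_apply, Matrix.transpose_apply, Fintype.sum_prod_type,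
    mul_ite, ite_mul, mul_zero, zero_mul, mul_one, one_mul,
    Finset.sum_ite_eq, Finset.sum_ite_eq', Finset.mem_univ, if_true,
    Finset.sum_ite_irrel, Finset.sum_const_zero, Finset.mul_sum, Finset.sum_mul]
  rw [Finset.sum_comm]
  refine Finset.sum_congr rfl fun c _ => ?_
  refine Finset.sum_congr rfl fun b _ => ?_
  ring
end

section
/- Triple entanglement-swapping identity: for all 2×2 complex matrices A, B, C, writing X₁₂ = ((A†⊗I) P_Φ (A⊗I)) ⊗ I ⊗ I, Y₂₃ = I ⊗ ((B†⊗I) P_Φ (B⊗I)) ⊗ I, Z₃₄ = I ⊗ I ⊗ ((C†⊗I) P_Φ (C⊗I)) as 16×16 matrices on (ℂ²)⊗⁴, one has tr₂₃(X₁₂ Y₂₃ Z₃₄) = ¼ ((C B̄ A)† ⊗ I) P_Φ ((C B̄ A) ⊗ I), where B̄ denotes the entrywise complex conjugate of B. -/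
open Matrix Kronecker Complex

lemma PΦ_eq : PΦ = Matrix.of fun p q =>
    if p.1 = p.2 then (if q.1 = q.2 then (1/2 : ℂ) else 0) else 0 := by
  ext ⟨a, b⟩ ⟨c, d⟩
  simp only [PΦ, bell, Matrix.of_apply]
  split_ifs <;> simp_all [Complex.conj_ofReal]
  rw [← mul_inv, ← Complex.ofReal_mul, Real.mul_self_sqrt (by norm_num)]
  norm_num

set_option maxHeartbeats 4000000 in
/-- Triple entanglement-swapping identity:
tr₂₃(X₁₂ Y₂₃ Z₃₄) = ¼ ((C B̄ A)† ⊗ I) P_Φ ((C B̄ A) ⊗ I), where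
X₁₂ = ((A†⊗I) P_Φ (A⊗I)) ⊗ I ⊗ I, Y₂₃ = I ⊗ ((B†⊗I) P_Φ (B⊗I)) ⊗ I,
Z₃₄ = I ⊗ I ⊗ ((C†⊗I) P_Φ (C⊗I)), and B̄ is the entrywise complex conjugate. -/
theorem stmt_13 (A B C : Matrix (Fin 2) (Fin 2) ℂ) :
    ptr23
      ((((Aᴴ ⊗ₖ (1 : Matrix (Fin 2) (Fin 2) ℂ)) * PΦ * (A ⊗ₖ (1 : Matrix (Fin 2) (Fin 2) ℂ))) ⊗ₖ
          ((1 : Matrix (Fin 2) (Fin 2) ℂ) ⊗ₖ (1 : Matrix (Fin 2) (Fin 2) ℂ))) *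
        mid ((Bᴴ ⊗ₖ (1 : Matrix (Fin 2) (Fin 2) ℂ)) * PΦ * (B ⊗ₖ (1 : Matrix (Fin 2) (Fin 2) ℂ))) *
        (((1 : Matrix (Fin 2) (Fin 2) ℂ) ⊗ₖ (1 : Matrix (Fin 2) (Fin 2) ℂ)) ⊗ₖ
          ((Cᴴ ⊗ₖ (1 : Matrix (Fin 2) (Fin 2) ℂ)) * PΦ * (C ⊗ₖ (1 : Matrix (Fin 2) (Fin 2) ℂ)))))
      = (1 / 4 : ℂ) •
          (((C * B.map (starRingEnd ℂ) * A)ᴴ ⊗ₖ (1 : Matrix (Fin 2) (Fin 2) ℂ)) * PΦ *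
            ((C * B.map (starRingEnd ℂ) * A) ⊗ₖ (1 : Matrix (Fin 2) (Fin 2) ℂ))) := by
  ext ⟨i, j⟩ ⟨k, l⟩
  simp only [ptr23, mid, PΦ_eq, Matrix.of_apply, Matrix.mul_apply, Fintype.sum_prod_type,
    Fin.sum_univ_two, kroneckerMap_apply, Matrix.smul_apply, smul_eq_mul,
    Matrix.conjTranspose_apply, Matrix.map_apply, Matrix.one_apply]
  fin_cases i <;> fin_cases j <;> fin_cases k <;> fin_cases l <;>
    norm_num <;> ring
end

section
/- No closed entanglement-swapping cycle exists in a composite GPT: let m : ℕ and let E, F : Fin m → Fin m → Prop satisfy (1) symmetry: ∀ i j, E i j → E j i, and ∀ i j, F i j → F j i; (2) disjointness: ∀ i j, E i j → ¬ F i j; (3) ∀ i j k l, E i j → F j k → E k l → E i l; (4) ∀ i j k l, F i j → E j k → F k l → F i l. Then there is no odd k ≥ 3 and no sequence of indices i₁, …, i_k in Fin m such that E i_t i_{t+1} holds for every odd t with 1 ≤ t ≤ k−1, F i_t i_{t+1} holds for every even t with 1 ≤ t ≤ k−1, and E i_k i₂ holds. -/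
/-- No closed entanglement-swapping cycle exists in a composite GPT.
`E i j` records that the pair of degrees of freedom (v_i, w_j) supports entangled
states, `F i j` that it supports entangled effects. Under the symmetry, disjointness
and (dual) entanglement-swapping concatenation rules, there is no odd `k ≥ 3` and
sequence `i₁, …, i_k` forming a closed alternating cycle: `E` on odd positions,
`F` on even positions of the chain, with the closing edge `E i_k i₂`. -/
theorem stmt_19 (m : ℕ) (E F : Fin m → Fin m → Prop)
    (hEsymm : ∀ i j, E i j → E j i)
    (hFsymm : ∀ i j, F i j → F j i)
    (hdisj : ∀ i j, E i j → ¬ F i j)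
    (hEFE : ∀ i j k l, E i j → F j k → E k l → E i l)
    (hFEF : ∀ i j k l, F i j → E j k → F k l → F i l) :
    ¬ ∃ (k : ℕ) (i : ℕ → Fin m), Odd k ∧ 3 ≤ k ∧
        (∀ t, 1 ≤ t → t ≤ k - 1 → Odd t → E (i t) (i (t + 1))) ∧
        (∀ t, 1 ≤ t → t ≤ k - 1 → Even t → F (i t) (i (t + 1))) ∧
        E (i k) (i 2) := by
  rintro ⟨k, i, hodd, hk3, hE, hF, hclose⟩
  have key : ∀ n, 2 * n + 3 ≤ k → F (i 2) (i (2 * n + 3)) := by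
    intro n
    induction n with
    | zero =>
      intro h
      have := hF 2 (by omega) (by omega) (by decide)
      simpa using this
    | succ p ih =>
      intro h
      have h1 : 2 * p + 3 ≤ k := by omega
      have hFp := ih h1
      have hEe : E (i (2 * p + 3)) (i (2 * p + 4)) := by
        have := hE (2 * p + 3) (by omega) (by omega) ⟨p + 1, by ring⟩
        simpa using this
      have hFe : F (i (2 * p + 4)) (i (2 * p + 5)) := by
        have := hF (2 * p + 4) (by omega) (by omega) ⟨p + 2, by ring⟩
        simpa using this
      have : F (i 2) (i (2 * p + 5)) := hFEF _ _ _ _ hFp hEe hFe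
      have heq : 2 * (p + 1) + 3 = 2 * p + 5 := by ring
      rw [heq]
      exact this
  obtain ⟨a, ha⟩ := hodd
  have hn : 2 * (a - 1) + 3 = k := by omega
  have hFk : F (i 2) (i k) := by rw [← hn]; exact key (a - 1) (by omega)
  exact hdisj _ _ hclose (hFsymm _ _ hFk)
end
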